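/- arXiv:2505.04513 — 2 statements merged into one kernel-verified Lean document; each statement's English description precedes it below -/
import Mathlib

section
/- Let p̃/q̃ = [a_1, ..., a_{n_1}] and p̃/(p̃ - q̃) = [b_1, ..., b_{n_3}] be dual Hirzebruch–Jung continued fractions with all coefficients ≥ 2, where 0 < q̃ < p̃ are coprime. Then the sum over i of (a_i - 3) equals n_3 - n_1 - 1. -/
/-- Hirzebruch–Jung continued fraction `[c₁, …, c_k] = c₁ - 1/(c₂ - 1/(… - 1/c_k))`. -/
def hjCF : List ℤ → ℚ
  | [] => 0
  | a :: l => (a : ℚ) - (hjCF l)⁻¹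

lemma hj_gt_one : ∀ l : List ℤ, (∀ x ∈ l, 2 ≤ x) → l ≠ [] → 1 < hjCF l := by
  intro l
  induction l with
  | nil => simp
  | cons a t ih =>
    intro h _
    have ha : 2 ≤ a := h a (by simp)
    have ha' : (2:ℚ) ≤ (a:ℚ) := by exact_mod_cast ha
    rcases eq_or_ne t [] with rfl | ht
    · simp only [hjCF]; norm_num; linarith
    · have h1 : 1 < hjCF t := ih (fun x hx => h x (by simp [hx])) ht
      have h2 : (hjCF t)⁻¹ < 1 := by
        rw [inv_lt_one₀ (by linarith)]; exact h1
      have h0 : 0 < (hjCF t)⁻¹ := inv_pos.mpr (by linarith)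
      simp only [hjCF]
      linarith

lemma hj_inv_bounds (l : List ℤ) (h : ∀ x ∈ l, 2 ≤ x) :
    0 ≤ (hjCF l)⁻¹ ∧ (hjCF l)⁻¹ < 1 := by
  rcases eq_or_ne l [] with rfl | hl
  · simp [hjCF]
  · have h1 := hj_gt_one l h hl
    constructor
    · positivity
    · rw [inv_lt_one₀ (by linarith)]; exact h1


lemma hj_decomp (l : List ℤ) (h2 : ∀ x ∈ l, 2 ≤ x) (v : ℚ) (hv : 1 < v)
    (hval : hjCF l = v) :
    ∃ a t, l = a :: t ∧ (∀ x ∈ t, 2 ≤ x) ∧ (hjCF t)⁻¹ = (a:ℚ) - v ∧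
      v ≤ (a:ℚ) ∧ (a:ℚ) < v + 1 := by
  cases l with
  | nil => simp only [hjCF] at hval; linarith
  | cons a t =>
    have ht2 : ∀ x ∈ t, 2 ≤ x := fun x hx => h2 x (by simp [hx])
    have hb := hj_inv_bounds t ht2
    have heq : (a:ℚ) - (hjCF t)⁻¹ = v := hval
    exact ⟨a, t, rfl, ht2, by linarith, by linarith, by linarith⟩

-- from inv = c with c > 0, get t nonempty and hjCF t = c⁻¹
lemma hj_of_inv (t : List ℤ) (c : ℚ) (hc : 0 < c) (h : (hjCF t)⁻¹ = c) :
    hjCF t = c⁻¹ := by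
  have : hjCF t ≠ 0 := by
    intro h0; rw [h0] at h; simp at h; linarith
  rw [← h, inv_inv]


lemma hj_key : ∀ n : ℕ, ∀ p q : ℤ, p.natAbs ≤ n → 0 < q → q < p → IsCoprime p q →
    ∀ lA lB, (∀ x ∈ lA, 2 ≤ x) → (∀ x ∈ lB, 2 ≤ x) →
    hjCF lA = (p:ℚ)/(q:ℚ) → hjCF lB = (p:ℚ)/((p:ℚ)-(q:ℚ)) →
    (lA.map (fun x => x - 3)).sum = (lB.length : ℤ) - (lA.length : ℤ) - 1 := by
  intro n
  induction n using Nat.strong_induction_on with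
  | _ n IH =>
  intro p q hn hq0 hqp hcop lA lB hA hB hcfA hcfB
  have hq0' : (0:ℚ) < (q:ℚ) := by exact_mod_cast hq0
  have hqp' : (q:ℚ) < (p:ℚ) := by exact_mod_cast hqp
  have hp0' : (0:ℚ) < (p:ℚ) := by linarith
  have hpq0' : (0:ℚ) < (p:ℚ) - (q:ℚ) := by linarith
  have hvA1 : 1 < (p:ℚ)/(q:ℚ) := (one_lt_div hq0').mpr hqp'
  have hvB1 : 1 < (p:ℚ)/((p:ℚ)-(q:ℚ)) := (one_lt_div hpq0').mpr (by linarith)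
  obtain ⟨a, tA, rfl, htA2, hinvA, haL, haU⟩ := hj_decomp lA hA _ hvA1 hcfA
  obtain ⟨b, tB, rfl, htB2, hinvB, hbL, hbU⟩ := hj_decomp lB hB _ hvB1 hcfB
  rcases lt_trichotomy (2*q) p with hc | hc | hc
  · -- case A : 2q < p ; recurse on (p - q, q)
    have hc' : 2*(q:ℚ) < (p:ℚ) := by exact_mod_cast hc
    have hvA2 : 2 < (p:ℚ)/(q:ℚ) := by rw [lt_div_iff₀ hq0']; linarith
    have hvB2 : (p:ℚ)/((p:ℚ)-(q:ℚ)) < 2 := by rw [div_lt_iff₀ hpq0']; linarith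
    have ha3 : 3 ≤ a := by
      have h1 : (2:ℚ) < (a:ℚ) := by linarith
      have h2 : (2:ℤ) < a := by exact_mod_cast h1
      omega
    have hb2 : b = 2 := by
      have h1 : (b:ℚ) < 3 := by linarith
      have h2 : (1:ℚ) < (b:ℚ) := by linarith
      have h1' : b < 3 := by exact_mod_cast h1
      have h2' : 1 < b := by exact_mod_cast h2
      omega
    have hp2q : (0:ℚ) < (p:ℚ) - 2*(q:ℚ) := by linarith
    have hnewA : hjCF ((a-1) :: tA) = ((p - q : ℤ):ℚ)/((q:ℤ):ℚ) := by
      show ((a-1:ℤ):ℚ) - (hjCF tA)⁻¹ = _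
      rw [hinvA]; push_cast; field_simp; ring
    have htB : hjCF tB = ((p - q : ℤ):ℚ)/(((p - q : ℤ):ℚ) - ((q:ℤ):ℚ)) := by
      have hcpos : (0:ℚ) < (b:ℚ) - (p:ℚ)/((p:ℚ)-(q:ℚ)) := by
        rw [hb2]; push_cast; linarith
      rw [hj_of_inv tB _ hcpos hinvB, hb2]
      have hrw : ((2:ℤ):ℚ) - (p:ℚ)/((p:ℚ)-(q:ℚ))
          = ((((p - q : ℤ):ℚ) - ((q:ℤ):ℚ)))/((p - q : ℤ):ℚ) := by
        push_cast; field_simp; ring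
      rw [hrw, inv_div]
    have hcop' : IsCoprime (p - q) q := by
      have h := hcop.add_mul_left_left (-1)
      have e : p + q * (-1) = p - q := by ring
      rwa [e] at h
    have hnA2 : ∀ x ∈ (a-1) :: tA, 2 ≤ x := by
      intro x hx
      rcases List.mem_cons.mp hx with rfl | hx'
      · omega
      · exact htA2 x hx'
    have hlt : (p - q).natAbs < n := by omega
    have hIH := IH _ hlt (p - q) q le_rfl (by omega) (by omega) hcop'
      ((a-1) :: tA) tB hnA2 htB2 hnewA htB
    simp only [List.map_cons, List.sum_cons, List.length_cons] at hIH ⊢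
    push_cast at hIH ⊢
    linarith
  · -- case C : p = 2q → q = 1, p = 2
    have hq1 : q = 1 := by
      have hdvd : q ∣ p := ⟨2, by omega⟩
      have hu : IsUnit q := hcop.isUnit_of_dvd' hdvd dvd_rfl
      rcases Int.isUnit_iff.mp hu with h | h <;> omega
    subst hq1
    have hp2 : p = 2 := by omega
    subst hp2
    norm_num at hinvA haU hinvB hbU haL hbL
    have ha2 : a = 2 := by
      have h1 : a < 3 := by exact_mod_cast haU
      have h2 : (2:ℤ) ≤ a := by exact_mod_cast haL
      omega
    have hb2 : b = 2 := by
      have h1 : b < 3 := by exact_mod_cast hbU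
      have h2 : (2:ℤ) ≤ b := by exact_mod_cast hbL
      omega
    have htAnil : tA = [] := by
      by_contra h
      have := hj_gt_one tA htA2 h
      have : (0:ℚ) < (hjCF tA)⁻¹ := inv_pos.mpr (by linarith)
      rw [hinvA, ha2] at this
      norm_num at this
    have htBnil : tB = [] := by
      by_contra h
      have := hj_gt_one tB htB2 h
      have : (0:ℚ) < (hjCF tB)⁻¹ := inv_pos.mpr (by linarith)
      rw [hinvB, hb2] at this
      norm_num at this
    subst htAnil htBnil ha2 hb2
    norm_num
  · -- case B : p < 2q ; recurse on (q, 2q - p)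
    have hc' : (p:ℚ) < 2*(q:ℚ) := by exact_mod_cast hc
    have hvA2 : (p:ℚ)/(q:ℚ) < 2 := by rw [div_lt_iff₀ hq0']; linarith
    have hvB2 : 2 < (p:ℚ)/((p:ℚ)-(q:ℚ)) := by rw [lt_div_iff₀ hpq0']; linarith
    have ha2 : a = 2 := by
      have h1 : (a:ℚ) < 3 := by linarith
      have h2 : (1:ℚ) < (a:ℚ) := by linarith
      have h1' : a < 3 := by exact_mod_cast h1
      have h2' : 1 < a := by exact_mod_cast h2
      omega
    have hb3 : 3 ≤ b := by
      have h1 : (2:ℚ) < (b:ℚ) := by linarith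
      have h2 : (2:ℤ) < b := by exact_mod_cast h1
      omega
    have h2qp : (0:ℚ) < 2*(q:ℚ) - (p:ℚ) := by linarith
    have htA : hjCF tA = ((q:ℤ):ℚ)/((2*q - p : ℤ):ℚ) := by
      have hcpos : (0:ℚ) < (a:ℚ) - (p:ℚ)/(q:ℚ) := by
        rw [ha2]; push_cast; linarith
      rw [hj_of_inv tA _ hcpos hinvA, ha2]
      have hrw : ((2:ℤ):ℚ) - (p:ℚ)/(q:ℚ) = ((2*q - p : ℤ):ℚ)/((q:ℤ):ℚ) := by
        push_cast; field_simp
      rw [hrw, inv_div]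
    have hnewB : hjCF ((b-1) :: tB) = ((q:ℤ):ℚ)/(((q:ℤ):ℚ) - ((2*q - p : ℤ):ℚ)) := by
      show ((b-1:ℤ):ℚ) - (hjCF tB)⁻¹ = _
      rw [hinvB]; push_cast
      have hne : (p:ℚ) - (q:ℚ) ≠ 0 := ne_of_gt hpq0'
      have e1 : (q:ℚ) - (2*(q:ℚ) - (p:ℚ)) = (p:ℚ) - (q:ℚ) := by ring
      rw [e1]
      have e2 : (p:ℚ)/((p:ℚ)-(q:ℚ)) - 1 = (q:ℚ)/((p:ℚ)-(q:ℚ)) := by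
        rw [eq_div_iff hne, sub_mul, div_mul_cancel₀ _ hne]; ring
      linarith
    have hcop' : IsCoprime q (2*q - p) := by
      have h := (hcop.symm.neg_right).add_mul_left_right 2
      have e : -p + q * 2 = 2*q - p := by ring
      rwa [e] at h
    have hnB2 : ∀ x ∈ (b-1) :: tB, 2 ≤ x := by
      intro x hx
      rcases List.mem_cons.mp hx with rfl | hx'
      · omega
      · exact htB2 x hx'
    have hlt : q.natAbs < n := by omega
    have hIH := IH _ hlt q (2*q - p) le_rfl (by omega) (by omega) hcop'
      tA ((b-1) :: tB) htA2 hnB2 htA hnewB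
    simp only [List.map_cons, List.sum_cons, List.length_cons] at hIH ⊢
    push_cast at hIH ⊢
    linarith

theorem stmt16 (lA lB : List ℤ)
    (hA : ∀ x ∈ lA, 2 ≤ x) (hB : ∀ x ∈ lB, 2 ≤ x)
    (p q : ℤ) (hq : 0 < q) (hqp : q < p) (hcop : IsCoprime p q)
    (hcfA : hjCF lA = (p : ℚ) / q) (hcfB : hjCF lB = (p : ℚ) / ((p : ℚ) - q)) :
    (lA.map (fun x => x - 3)).sum = (lB.length : ℤ) - (lA.length : ℤ) - 1 :=
  hj_key p.natAbs p q le_rfl hq hqp hcop lA lB hA hB hcfA hcfB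
end

section
/- Let p, q be coprime with 0 < q < p and p/q = [2, 2, ..., 2, a_{t+1}, ..., a_n] where the first t+1 entries equal 2 (0 ≤ t < n), a_{t+1} > 2, and all a_i ≥ 2. Let p_t/q_t = [a_{t+1}, ..., a_n] in lowest terms. Then q_t/(p_t - q_t) = q/(p - q) - (t + 1) as rational numbers, and p_t - q_t = p - q. -/
lemma hjCF_two_cons {L : List ℤ} {p q : ℚ} (hp : p ≠ 0) (h : hjCF L = p / q) :
    hjCF (2 :: L) = (2 * p - q) / p := by
  rw [hjCF, h, inv_div]
  field_simp
  push_cast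
  ring

lemma hjCF_replicate_two_append {L : List ℤ} {p q : ℚ} (hp : 0 < p) (hqp : q ≤ p)
    (h : hjCF L = p / q) (n : ℕ) :
    hjCF (List.replicate n 2 ++ L) = (p + n * (p - q)) / (q + n * (p - q)) := by
  induction n with
  | zero => simpa using h
  | succ n ih =>
    have hnum : p + n * (p - q) ≠ 0 := by
      have : 0 ≤ (n : ℚ) * (p - q) := mul_nonneg n.cast_nonneg (sub_nonneg.mpr hqp)
      positivity
    rw [List.replicate_succ, List.cons_append, hjCF_two_cons hnum ih]
    push_cast
    ring

lemma IsCoprime.add_mul_sub {R : Type*} [CommRing R] {p q : R} (h : IsCoprime p q) (n : R) :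
    IsCoprime (p + n * (p - q)) (q + n * (p - q)) := by
  obtain ⟨a, b, hab⟩ := h
  -- `(p, q) ↦ (p + n (p - q), q + n (p - q))` has determinant `1`; invert it on `a p + b q = 1`.
  exact ⟨a - n * (a + b), b + n * (a + b), by linear_combination hab⟩

lemma Int.eq_and_eq_of_div_eq_div_of_isCoprime {a b c d : ℤ} (hb : 0 < b) (hd : 0 < d)
    (hab : IsCoprime a b) (hcd : IsCoprime c d) (h : (a : ℚ) / b = c / d) : a = c ∧ b = d :=
  Rat.div_int_inj hb hd (Int.isCoprime_iff_gcd_eq_one.mp hab)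
    (Int.isCoprime_iff_gcd_eq_one.mp hcd) h

theorem stmt17_general (t : ℕ) (b : ℤ) (l : List ℤ) (p q pt qt : ℤ)
    (hq : 0 < q) (hcop : IsCoprime p q)
    (hfull : hjCF (List.replicate (t + 1) 2 ++ (b :: l)) = (p : ℚ) / q)
    (hqt : 0 < qt) (hptqt : qt < pt) (hcopt : IsCoprime pt qt)
    (htail : hjCF (b :: l) = (pt : ℚ) / qt) :
    (qt : ℚ) / ((pt : ℚ) - qt) = (q : ℚ) / ((p : ℚ) - q) - ((t : ℚ) + 1) ∧
      pt - qt = p - q := by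
  have hpt : (0 : ℚ) < pt := by exact_mod_cast hqt.trans hptqt
  have hrep := hjCF_replicate_two_append hpt (by exact_mod_cast hptqt.le) htail (t + 1)
  rw [hfull] at hrep
  have hden : 0 < qt + (t + 1 : ℤ) * (pt - qt) := by
    have : 0 ≤ (t + 1 : ℤ) * (pt - qt) := by positivity
    omega
  obtain ⟨hp, hq'⟩ := Int.eq_and_eq_of_div_eq_div_of_isCoprime hq hden hcop
    (hcopt.add_mul_sub _) (by exact_mod_cast hrep)
  have hdiff : pt - qt = p - q := by rw [hp, hq']; ring
  have hd : (pt : ℚ) - qt ≠ 0 := sub_ne_zero.mpr (by exact_mod_cast hptqt.ne')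
  refine ⟨?_, hdiff⟩
  rw [show (p : ℚ) - q = pt - qt by exact_mod_cast hdiff.symm, hq']
  push_cast
  field_simp
  ring

theorem stmt17 (t : ℕ) (b : ℤ) (l : List ℤ) (p q pt qt : ℤ)
    (hb : 2 < b) (hl : ∀ x ∈ l, 2 ≤ x)
    (hq : 0 < q) (hqp : q < p) (hcop : IsCoprime p q)
    (hfull : hjCF (List.replicate (t + 1) 2 ++ (b :: l)) = (p : ℚ) / q)
    (hqt : 0 < qt) (hptqt : qt < pt) (hcopt : IsCoprime pt qt)
    (htail : hjCF (b :: l) = (pt : ℚ) / qt) :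
    (qt : ℚ) / ((pt : ℚ) - qt) = (q : ℚ) / ((p : ℚ) - q) - ((t : ℚ) + 1) ∧
      pt - qt = p - q :=
  stmt17_general t b l p q pt qt hq hcop hfull hqt hptqt hcopt htail
end
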